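/- arXiv:2310.16335 — 3 statements merged into one kernel-verified Lean document; each statement's English description precedes it below -/
import Mathlib

section
/- Suppose the swap loss with margin 0 has converged to 0, i.e., s(a i) ≤ s(a' i) for all i : Fin k, where s is an injective score function, a is the strict top-k ranking for s, and a' : Fin k → Fin m is the gradient-induced ranking. Then for every position i : Fin k, the item a' i lies among the top (i+1) items of the original ranking, i.e., there exists j ≤ i with a' i = a j. -/
theorem stmt_2 (m k : ℕ) (hm : 0 < m) (hk : 0 < k) (hkm : k ≤ m)
    (s : Fin m → ℝ) (hs : Function.Injective s)
    (a : Fin k → Fin m) (ha : Function.Injective a)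
    (ha_sorted : ∀ i j : Fin k, i < j → s (a i) > s (a j))
    (ha_top : ∀ (i : Fin k) (x : Fin m), x ∉ Set.range a → s (a i) > s x)
    (a' : Fin k → Fin m)
    (hzero : ∀ i : Fin k, s (a i) ≤ s (a' i)) :
    ∀ i : Fin k, ∃ j : Fin k, j ≤ i ∧ a' i = a j := by
  intro i
  by_cases hr : a' i ∈ Set.range a
  · obtain ⟨j, hj⟩ := hr
    refine ⟨j, ?_, hj.symm⟩
    by_contra hlt
    push_neg at hlt
    have := ha_sorted i j hlt
    rw [hj] at this
    exact absurd (hzero i) (not_le.mpr this)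
  · exact absurd (hzero i) (not_le.mpr (ha_top i _ hr))
end

section
/- Suppose the swap loss with margin 0 has converged to 0, i.e., s(a i) ≤ s(a' i) for all i : Fin k, where s is an injective score function, a is the strict top-k ranking for s, and a' : Fin k → Fin m is the gradient-induced ranking. Then the items at the first position must coincide: a 0 = a' 0. -/
theorem stmt_3 (m k : ℕ) (hm : 0 < m) (hk : 0 < k) (hkm : k ≤ m)
    (s : Fin m → ℝ) (hs : Function.Injective s)
    (a : Fin k → Fin m) (ha : Function.Injective a)
    (ha_sorted : ∀ i j : Fin k, i < j → s (a i) > s (a j))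
    (ha_top : ∀ (i : Fin k) (x : Fin m), x ∉ Set.range a → s (a i) > s x)
    (a' : Fin k → Fin m)
    (hzero : ∀ i : Fin k, s (a i) ≤ s (a' i)) :
    a ⟨0, hk⟩ = a' ⟨0, hk⟩ := by
  by_cases h : a' ⟨0, hk⟩ ∈ Set.range a
  · obtain ⟨j, hj⟩ := h
    rcases eq_or_lt_of_le (show (⟨0, hk⟩ : Fin k) ≤ j from Fin.mk_le_of_le_val (Nat.zero_le _)) with hj0 | hj0
    · rw [← hj, ← hj0]
    · exact absurd (hzero ⟨0, hk⟩) (by rw [← hj]; exact not_le.mpr (ha_sorted _ _ hj0))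
  · exact absurd (hzero ⟨0, hk⟩) (not_le.mpr (ha_top _ _ h))
end

section
/- Suppose k ≥ 2 and the swap loss with margin 0 has converged to 0, i.e., s(a i) ≤ s(a' i) for all i : Fin k, where s is an injective score function, a is the strict top-k ranking for s, and a' : Fin k → Fin m is the gradient-induced ranking. If the item placed at the second position of a' differs from the one at its first position, i.e., a' 1 ≠ a' 0, then the second positions coincide: a 1 = a' 1. -/
theorem stmt_5 (m k : ℕ) (hm : 0 < m) (hk : 2 ≤ k) (hkm : k ≤ m)
    (s : Fin m → ℝ) (hs : Function.Injective s)
    (a : Fin k → Fin m) (ha : Function.Injective a)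
    (ha_sorted : ∀ i j : Fin k, i < j → s (a i) > s (a j))
    (ha_top : ∀ (i : Fin k) (x : Fin m), x ∉ Set.range a → s (a i) > s x)
    (a' : Fin k → Fin m)
    (hzero : ∀ i : Fin k, s (a i) ≤ s (a' i))
    (hne : a' ⟨1, by omega⟩ ≠ a' ⟨0, by omega⟩) :
    a ⟨1, by omega⟩ = a' ⟨1, by omega⟩ := by
  set i0 : Fin k := ⟨0, by omega⟩
  set i1 : Fin k := ⟨1, by omega⟩
  -- a 0 is the max
  have hmax : ∀ x : Fin m, s x ≤ s (a i0) := by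
    intro x
    by_cases hx : x ∈ Set.range a
    · obtain ⟨j, rfl⟩ := hx
      rcases eq_or_ne j i0 with rfl | hj
      · exact le_refl _
      · exact le_of_lt (ha_sorted i0 j (lt_of_le_of_ne (Fin.mk_le_of_le_val (Nat.zero_le _)) (Ne.symm hj)))
    · exact le_of_lt (ha_top i0 x hx)
  have h0 : a' i0 = a i0 := hs (le_antisymm (hmax _) (hzero i0))
  have h1ne : a' i1 ≠ a i0 := h0 ▸ hne
  -- s (a' i1) ≤ s (a i1)
  have hle : s (a' i1) ≤ s (a i1) := by
    by_cases hx : a' i1 ∈ Set.range a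
    · obtain ⟨j, hj⟩ := hx
      have hj0 : j ≠ i0 := by rintro rfl; exact h1ne hj.symm
      have : i1 ≤ j := by
        have : (0 : ℕ) < j.val := Nat.pos_of_ne_zero (fun h => hj0 (Fin.ext h))
        exact Fin.mk_le_of_le_val this
      rcases eq_or_lt_of_le this with rfl | hlt
      · exact le_of_eq (congrArg s hj.symm)
      · exact hj ▸ le_of_lt (ha_sorted i1 j hlt)
    · exact le_of_lt (ha_top i1 _ hx)
  exact hs (le_antisymm (hzero i1) hle)
end
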